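/- Let f : (ℝ³)³ → ℝ⁵ be given by f(a₁,a₂,a₃) = (⟨a₁,a₂⟩, ⟨a₂,a₃⟩, ⟨a₃,a₁⟩, ‖a₁‖²−‖a₂‖², ‖a₂‖²−‖a₃‖²). Then for every point a = (a₁,a₂,a₃) ∈ (ℝ³)³ with Φ(a) = ⟨a₁, a₂ × a₃⟩ ≠ 0, the (Fréchet) derivative of f at a is a surjective linear map (ℝ³)³ → ℝ⁵ (i.e. f has rank 5 at every such point). -/

import Mathlib

open scoped RealInnerProductSpace

noncomputable section

/-- `ℝ³` with the standard (Euclidean) inner product. -/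
abbrev E3 : Type := EuclideanSpace ℝ (Fin 3)

/-- The cross product on `ℝ³`. -/
def cross (u v : E3) : E3 :=
  (WithLp.equiv 2 (Fin 3 → ℝ)).symm
    (crossProduct ((WithLp.equiv 2 (Fin 3 → ℝ)) u) ((WithLp.equiv 2 (Fin 3 → ℝ)) v))

/-- `Φ(a₁,a₂,a₃) = ⟨a₁, a₂ × a₃⟩`. -/
def Phi (a : E3 × E3 × E3) : ℝ := ⟪a.1, cross a.2.1 a.2.2⟫

/-- The five Casimir functions collected into a map `(ℝ³)³ → ℝ⁵`. -/
def casimir (a : E3 × E3 × E3) : Fin 5 → ℝ :=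
  ![⟪a.1, a.2.1⟫, ⟪a.2.1, a.2.2⟫, ⟪a.2.2, a.1⟫,
    ‖a.1‖ ^ 2 - ‖a.2.1‖ ^ 2, ‖a.2.1‖ ^ 2 - ‖a.2.2‖ ^ 2]

lemma inner_eq_dot (x y : E3) :
    ⟪x, y⟫ = dotProduct ((WithLp.equiv 2 (Fin 3 → ℝ)) x) ((WithLp.equiv 2 (Fin 3 → ℝ)) y) := by
  simp only [PiLp.inner_apply, RCLike.inner_apply, conj_trivial, dotProduct]; exact Finset.sum_congr rfl (fun i _ => mul_comm _ _)

lemma inner_self_cross (u v : E3) : ⟪u, cross u v⟫ = 0 := by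
  rw [inner_eq_dot]; simp only [cross, Equiv.apply_symm_apply]; exact dot_self_cross _ _

lemma inner_cross_self (u v : E3) : ⟪v, cross u v⟫ = 0 := by
  rw [inner_eq_dot]; simp only [cross, Equiv.apply_symm_apply]; exact dot_cross_self _ _

lemma inner_cross_perm (u v w : E3) : ⟪u, cross v w⟫ = ⟪v, cross w u⟫ := by
  rw [inner_eq_dot, inner_eq_dot]; simp only [cross, Equiv.apply_symm_apply]
  exact triple_product_permutation _ _ _

set_option maxHeartbeats 2000000 in
/-- At every point where `Φ ≠ 0`, the derivative of the Casimir map `f` is surjective,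
i.e. `f` has rank 5 there. -/
theorem casimir_fderiv_surjective (a : E3 × E3 × E3) (ha : Phi a ≠ 0) :
    Function.Surjective (fderiv ℝ casimir a) := by
  have h1 : HasFDerivAt (fun p : E3 × E3 × E3 => p.1)
      (ContinuousLinearMap.fst ℝ E3 (E3 × E3)) a :=
    (ContinuousLinearMap.fst ℝ E3 (E3 × E3)).hasFDerivAt
  have h2 : HasFDerivAt (fun p : E3 × E3 × E3 => p.2.1)
      ((ContinuousLinearMap.fst ℝ E3 E3).comp (ContinuousLinearMap.snd ℝ E3 (E3 × E3))) a :=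
    ((ContinuousLinearMap.fst ℝ E3 E3).comp (ContinuousLinearMap.snd ℝ E3 (E3 × E3))).hasFDerivAt
  have h3 : HasFDerivAt (fun p : E3 × E3 × E3 => p.2.2)
      ((ContinuousLinearMap.snd ℝ E3 E3).comp (ContinuousLinearMap.snd ℝ E3 (E3 × E3))) a :=
    ((ContinuousLinearMap.snd ℝ E3 E3).comp (ContinuousLinearMap.snd ℝ E3 (E3 × E3))).hasFDerivAt
  have hc0 := h1.inner ℝ h2
  have hc1 := h2.inner ℝ h3
  have hc2 := h3.inner ℝ h1
  have hc3 := (h1.inner ℝ h1).sub (h2.inner ℝ h2)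
  have hc4 := (h2.inner ℝ h2).sub (h3.inner ℝ h3)
  set L1 : (E3 × E3 × E3) →L[ℝ] E3 := ContinuousLinearMap.fst ℝ E3 (E3 × E3) with hL1
  set L2 : (E3 × E3 × E3) →L[ℝ] E3 :=
    (ContinuousLinearMap.fst ℝ E3 E3).comp (ContinuousLinearMap.snd ℝ E3 (E3 × E3)) with hL2
  set L3 : (E3 × E3 × E3) →L[ℝ] E3 :=
    (ContinuousLinearMap.snd ℝ E3 E3).comp (ContinuousLinearMap.snd ℝ E3 (E3 × E3)) with hL3
  have hD : HasFDerivAt casimir (ContinuousLinearMap.pi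
      ![(fderivInnerCLM ℝ (a.1, a.2.1)).comp (L1.prod L2),
        (fderivInnerCLM ℝ (a.2.1, a.2.2)).comp (L2.prod L3),
        (fderivInnerCLM ℝ (a.2.2, a.1)).comp (L3.prod L1),
        (fderivInnerCLM ℝ (a.1, a.1)).comp (L1.prod L1) -
          (fderivInnerCLM ℝ (a.2.1, a.2.1)).comp (L2.prod L2),
        (fderivInnerCLM ℝ (a.2.1, a.2.1)).comp (L2.prod L2) -
          (fderivInnerCLM ℝ (a.2.2, a.2.2)).comp (L3.prod L3)]) a := by
    apply hasFDerivAt_pi''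
    intro i
    fin_cases i <;> rw [ContinuousLinearMap.proj_pi] <;>
      simp only [casimir, Matrix.cons_val_zero, Matrix.cons_val_one, Matrix.head_cons,
        Matrix.cons_val_two, Matrix.tail_cons, Matrix.cons_val_three, Matrix.cons_val_four,
        ← real_inner_self_eq_norm_sq]
    · exact hc0
    · exact hc1
    · exact hc2
    · exact hc3
    · exact hc4
  rw [hD.fderiv]
  intro v
  set b1 : E3 := (Phi a)⁻¹ • cross a.2.1 a.2.2 with hb1
  set b2 : E3 := (Phi a)⁻¹ • cross a.2.2 a.1 with hb2
  set b3 : E3 := (Phi a)⁻¹ • cross a.1 a.2.1 with hb3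
  have c11 : ⟪a.1, cross a.2.1 a.2.2⟫ = Phi a := rfl
  have c21 : ⟪a.2.1, cross a.2.1 a.2.2⟫ = 0 := inner_self_cross _ _
  have c31 : ⟪a.2.2, cross a.2.1 a.2.2⟫ = 0 := inner_cross_self _ _
  have c12 : ⟪a.1, cross a.2.2 a.1⟫ = 0 := inner_cross_self _ _
  have c22 : ⟪a.2.1, cross a.2.2 a.1⟫ = Phi a := by
    rw [inner_cross_perm, inner_cross_perm]; rfl
  have c32 : ⟪a.2.2, cross a.2.2 a.1⟫ = 0 := inner_self_cross _ _
  have c13 : ⟪a.1, cross a.1 a.2.1⟫ = 0 := inner_self_cross _ _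
  have c23 : ⟪a.2.1, cross a.1 a.2.1⟫ = 0 := inner_cross_self _ _
  have c33 : ⟪a.2.2, cross a.1 a.2.1⟫ = Phi a := by
    rw [inner_cross_perm]; rfl
  have q11 : ⟪a.1, b1⟫ = 1 := by
    rw [hb1, real_inner_smul_right, c11, inv_mul_cancel₀ ha]
  have q21 : ⟪a.2.1, b1⟫ = 0 := by rw [hb1, real_inner_smul_right, c21, mul_zero]
  have q31 : ⟪a.2.2, b1⟫ = 0 := by rw [hb1, real_inner_smul_right, c31, mul_zero]
  have q12 : ⟪a.1, b2⟫ = 0 := by rw [hb2, real_inner_smul_right, c12, mul_zero]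
  have q22 : ⟪a.2.1, b2⟫ = 1 := by
    rw [hb2, real_inner_smul_right, c22, inv_mul_cancel₀ ha]
  have q32 : ⟪a.2.2, b2⟫ = 0 := by rw [hb2, real_inner_smul_right, c32, mul_zero]
  have q13 : ⟪a.1, b3⟫ = 0 := by rw [hb3, real_inner_smul_right, c13, mul_zero]
  have q23 : ⟪a.2.1, b3⟫ = 0 := by rw [hb3, real_inner_smul_right, c23, mul_zero]
  have q33 : ⟪a.2.2, b3⟫ = 1 := by
    rw [hb3, real_inner_smul_right, c33, inv_mul_cancel₀ ha]
  have r11 : ⟪b1, a.1⟫ = 1 := by rw [real_inner_comm]; exact q11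
  have r21 : ⟪b1, a.2.1⟫ = 0 := by rw [real_inner_comm]; exact q21
  have r31 : ⟪b1, a.2.2⟫ = 0 := by rw [real_inner_comm]; exact q31
  have r12 : ⟪b2, a.1⟫ = 0 := by rw [real_inner_comm]; exact q12
  have r22 : ⟪b2, a.2.1⟫ = 1 := by rw [real_inner_comm]; exact q22
  have r32 : ⟪b2, a.2.2⟫ = 0 := by rw [real_inner_comm]; exact q32
  have r13 : ⟪b3, a.1⟫ = 0 := by rw [real_inner_comm]; exact q13
  have r23 : ⟪b3, a.2.1⟫ = 0 := by rw [real_inner_comm]; exact q23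
  have r33 : ⟪b3, a.2.2⟫ = 1 := by rw [real_inner_comm]; exact q33
  refine ⟨(v 0 • b2 + ((v 3 + v 4) / 2) • b1, v 1 • b3 + (v 4 / 2) • b2, v 2 • b1), ?_⟩
  funext i
  fin_cases i <;>
    simp [hL1, hL2, hL3, -PiLp.inner_apply, fderivInnerCLM_apply, inner_add_left, inner_add_right, real_inner_smul_left,
      real_inner_smul_right, q11, q21, q31, q12, q22, q32, q13, q23, q33,
      r11, r21, r31, r12, r22, r32, r13, r23, r33]

end
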